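/- With G_{m,i}(0,…,0) (r zeros) defined as the r-fold convolution ∑_{l_1+···+l_r+i = m} ∏_{k=1}^{r} φ(l_k | m - l_1 - ··· - l_{k-1}), where φ(l|m) = y^l (μ;q)_l (y;q)_{m-l}/(μy;q)_m · [m choose l]_q, one has for 0 ≤ i ≤ m: G_{m,i}(0,…,0) = ∑_{j=i}^{m} (-1)^{i+j} q^{i(i-1)/2 + j(j+1-2m)/2} [m choose j]_q [j choose i]_q η_j^r, where η_j = (y;q)_j/(μy;q)_j. -/

import Mathlib

/-!
`φ(l | m)` is the transition kernel of a chain on `ℕ` that jumps from `m` to `m - l`, and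
`G_{m,i}(0, …, 0)` is its `r`-step transition probability from `m` to `i`. The kernel is triangular
with eigenvalues `η_j`: by the q-Chu–Vandermonde sum, `f_j(n) = q^{-jn} [n choose j]_q` satisfies
`∑_l φ(l | m) f_j(m - l) = η_j f_j(m)`. By the q-binomial theorem the functions
`g_j(i) = (-1)^{i+j} q^{C(i,2) + C(j+1,2)} [j choose i]_q` are dual to them,
`∑_j g_j(i) f_j(m) = δ_{im}`, so `G_{m,i} = ∑_j g_j(i) f_j(m) η_j^r` follows by induction on `r`.
-/

noncomputable def qPoch (z q : ℝ) (m : ℕ) : ℝ := ∏ j ∈ Finset.range m, (1 - z * q ^ j)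

noncomputable def qBinom (q : ℝ) (m l : ℕ) : ℝ :=
  if l ≤ m then qPoch q q m / (qPoch q q l * qPoch q q (m - l)) else 0

noncomputable def phi (q μ y : ℝ) (l m : ℕ) : ℝ :=
  y ^ l * qPoch μ q l * qPoch y q (m - l) / qPoch (μ * y) q m * qBinom q m l

noncomputable def eta (q μ y : ℝ) (j : ℕ) : ℝ := qPoch y q j / qPoch (μ * y) q j

open Finset

theorem Nat.choose_two_add (a b : ℕ) : (a + b).choose 2 = a.choose 2 + b.choose 2 + a * b := by
  induction b with
  | zero => simp
  | succ b ih =>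
    rw [← add_assoc, Nat.choose_succ_succ', Nat.choose_succ_succ' b, ih, Nat.choose_one_right,
      Nat.choose_one_right]
    ring

theorem Nat.choose_two_add_succ_choose_two (n : ℕ) : n.choose 2 + (n + 1).choose 2 = n * n := by
  induction n with
  | zero => rfl
  | succ n ih =>
    have h := Nat.choose_two_add (n + 1) 1
    have h' := Nat.choose_two_add n 1
    simp only [Nat.choose_succ_self, add_zero, mul_one] at h h'
    linarith

theorem Finset.Nat.sum_antidiagonalTuple_succ {M : Type*} [AddCommMonoid M] (k n : ℕ)
    (f : (Fin (k + 1) → ℕ) → M) :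
    ∑ t ∈ antidiagonalTuple (k + 1) n, f t
      = ∑ p ∈ antidiagonal n, ∑ t ∈ antidiagonalTuple k p.2, f (Fin.cons p.1 t) := by
  simp only [Finset.sum, antidiagonalTuple, Multiset.Nat.antidiagonalTuple,
    List.Nat.antidiagonalTuple, Multiset.map_coe, Multiset.sum_coe, List.flatMap_def,
    List.map_flatten, List.sum_flatten, List.map_map, Function.comp_def]
  rfl

theorem qPoch_zero (z q : ℝ) : qPoch z q 0 = 1 := prod_range_zero _

theorem qPoch_succ (z q : ℝ) (n : ℕ) : qPoch z q (n + 1) = qPoch z q n * (1 - z * q ^ n) :=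
  prod_range_succ _ _

theorem qPoch_add (z q : ℝ) (a b : ℕ) :
    qPoch z q (a + b) = qPoch z q a * qPoch (z * q ^ a) q b := by
  rw [qPoch, prod_range_add]
  congr 1
  exact prod_congr rfl fun k _ => by rw [pow_add, mul_assoc]

theorem qPoch_pos {z q : ℝ} (hz : z < 1) (hq0 : 0 ≤ q) (hq1 : q ≤ 1) (n : ℕ) :
    0 < qPoch z q n := by
  refine prod_pos fun k _ => ?_
  have hqk0 : 0 ≤ q ^ k := pow_nonneg hq0 k
  have hqk1 : q ^ k ≤ 1 := pow_le_one₀ hq0 hq1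
  rcases le_or_gt z 0 with hz0 | hz0 <;> nlinarith

theorem qBinom_of_lt {q : ℝ} {m l : ℕ} (h : m < l) : qBinom q m l = 0 := if_neg (by omega)

theorem qBinom_zero_right {q : ℝ} (hq : ∀ k, qPoch q q k ≠ 0) (m : ℕ) : qBinom q m 0 = 1 := by
  rw [qBinom, if_pos m.zero_le, qPoch_zero, one_mul, Nat.sub_zero, div_self (hq m)]

theorem qBinom_self {q : ℝ} (hq : ∀ k, qPoch q q k ≠ 0) (m : ℕ) : qBinom q m m = 1 := by
  rw [qBinom, if_pos le_rfl, Nat.sub_self, qPoch_zero, mul_one, div_self (hq m)]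

theorem qBinom_symm_add (q : ℝ) (a b : ℕ) : qBinom q (a + b) a = qBinom q (a + b) b := by
  rw [qBinom, qBinom, if_pos (by omega), if_pos (by omega), Nat.add_sub_cancel_left,
    Nat.add_sub_cancel, mul_comm]

theorem qBinom_succ_succ {q : ℝ} (hq : ∀ k, qPoch q q k ≠ 0) (n l : ℕ) :
    qBinom q (n + 1) (l + 1) = qBinom q n (l + 1) + q ^ (n - l) * qBinom q n l := by
  rcases lt_trichotomy (l + 1) (n + 1) with h | h | h
  · obtain ⟨k, rfl⟩ : ∃ k, n = l + k + 1 := ⟨n - l - 1, by omega⟩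
    have hl : 1 - q * q ^ l ≠ 0 := right_ne_zero_of_mul (qPoch_succ q q l ▸ hq (l + 1))
    have hk : 1 - q * q ^ k ≠ 0 := right_ne_zero_of_mul (qPoch_succ q q k ▸ hq (k + 1))
    simp only [qBinom, if_pos (by omega : l + 1 ≤ l + k + 1 + 1),
      if_pos (by omega : l + 1 ≤ l + k + 1), if_pos (by omega : l ≤ l + k + 1),
      show l + k + 1 + 1 - (l + 1) = k + 1 by omega,
      show l + k + 1 - (l + 1) = k by omega, show l + k + 1 - l = k + 1 by omega, qPoch_succ]
    field_simp [hq l, hq k, hl, hk]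
    ring
  · obtain rfl : l = n := by omega
    rw [qBinom_self hq, qBinom_of_lt (by omega), qBinom_self hq, Nat.sub_self, pow_zero]
    ring
  · rw [qBinom_of_lt h, qBinom_of_lt (by omega), qBinom_of_lt (by omega), mul_zero, add_zero]

theorem qBinom_mul_qBinom {q : ℝ} (hq : ∀ k, qPoch q q k ≠ 0) {m a b : ℕ} (h : a + b ≤ m) :
    qBinom q m (a + b) * qBinom q (a + b) a = qBinom q m a * qBinom q (m - a) b := by
  rw [qBinom, qBinom, qBinom, qBinom, if_pos h, if_pos (by omega), if_pos (by omega),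
    if_pos (by omega), Nat.add_sub_cancel_left, show m - a - b = m - (a + b) by omega]
  field_simp [hq]

theorem qBinom_mul_qBinom_comm {q : ℝ} (hq : ∀ k, qPoch q q k ≠ 0) {m a b : ℕ} (h : a + b ≤ m) :
    qBinom q m a * qBinom q (m - a) b = qBinom q m b * qBinom q (m - b) a := by
  rw [← qBinom_mul_qBinom hq h, ← qBinom_mul_qBinom hq (by omega : b + a ≤ m), qBinom_symm_add,
    add_comm]

theorem sum_mul_qBinom_succ {q : ℝ} (hq : ∀ k, qPoch q q k ≠ 0) (n : ℕ) (f : ℕ → ℝ) :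
    ∑ l ∈ range (n + 1 + 1), f l * qBinom q (n + 1) l
      = ∑ l ∈ range (n + 1), (f l + q ^ (n - l) * f (l + 1)) * qBinom q n l := by
  have hshift : ∑ l ∈ range (n + 1), f (l + 1) * qBinom q n (l + 1) + f 0
      = ∑ l ∈ range (n + 1), f l * qBinom q n l := by
    rw [sum_range_succ, qBinom_of_lt (Nat.lt_succ_self n), mul_zero, add_zero,
      sum_range_succ' _ n, qBinom_zero_right hq, mul_one]
  rw [sum_range_succ', qBinom_zero_right hq, mul_one]
  simp only [qBinom_succ_succ hq, add_mul, mul_add, sum_add_distrib, ← hshift]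
  rw [add_right_comm]
  exact congrArg _ (sum_congr rfl fun l _ => by ring)

theorem qPoch_eq_sum_qBinom {q : ℝ} (hq : ∀ k, qPoch q q k ≠ 0) (z : ℝ) (n : ℕ) :
    qPoch z q n = ∑ s ∈ range (n + 1), (-1) ^ s * q ^ s.choose 2 * z ^ s * qBinom q n s := by
  induction n with
  | zero => simp [qPoch_zero, qBinom_self hq]
  | succ n ih =>
    rw [sum_mul_qBinom_succ hq, qPoch_succ, ih, sum_mul]
    refine sum_congr rfl fun s hs => ?_
    obtain ⟨k, rfl⟩ := Nat.exists_eq_add_of_le (Nat.lt_succ_iff.mp (mem_range.mp hs))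
    rw [Nat.choose_two_add, Nat.add_sub_cancel_left]
    simp only [Nat.choose_succ_self, add_zero, mul_one]
    ring

theorem qPoch_mul_eq_sum_qBinom {q : ℝ} (hq : ∀ k, qPoch q q k ≠ 0) (a z : ℝ) (n : ℕ) :
    qPoch (a * z) q n
      = ∑ l ∈ range (n + 1), z ^ l * qPoch a q l * qPoch z q (n - l) * qBinom q n l := by
  induction n with
  | zero => simp [qPoch_zero, qBinom_self hq]
  | succ n ih =>
    rw [sum_mul_qBinom_succ hq, qPoch_succ, ih, sum_mul]
    refine sum_congr rfl fun l hl => ?_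
    obtain ⟨k, rfl⟩ := Nat.exists_eq_add_of_le (Nat.lt_succ_iff.mp (mem_range.mp hl))
    rw [show l + k + 1 - l = k + 1 by omega, show l + k + 1 - (l + 1) = k by omega,
      Nat.add_sub_cancel_left, qPoch_succ, qPoch_succ]
    ring

theorem sum_phi_mul_pow_mul_qBinom {q μ y : ℝ} (hq : ∀ k, qPoch q q k ≠ 0)
    (hμy : ∀ k, qPoch (μ * y) q k ≠ 0) (j m : ℕ) :
    ∑ l ∈ range (m + 1), phi q μ y l m * q ^ (j * l) * qBinom q (m - l) j
      = qBinom q m j * eta q μ y j := by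
  rcases lt_or_ge m j with hmj | hjm
  · rw [qBinom_of_lt hmj, zero_mul]
    exact sum_eq_zero fun l _ => by rw [qBinom_of_lt (by omega), mul_zero]
  obtain ⟨n, rfl⟩ := Nat.exists_eq_add_of_le hjm
  have hμyj : ∀ k, qPoch (μ * y * q ^ j) q k ≠ 0 := fun k h =>
    hμy (j + k) (by rw [qPoch_add, h, mul_zero])
  -- each term is a term of the q-Chu–Vandermonde sum with `a = μ`, `z = y q^j`
  have hsummand : ∀ l ∈ range (n + 1), phi q μ y l (j + n) * q ^ (j * l) * qBinom q (j + n - l) j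
      = qBinom q (j + n) j * qPoch y q j / (qPoch (μ * y) q j * qPoch (μ * y * q ^ j) q n)
        * ((y * q ^ j) ^ l * qPoch μ q l * qPoch (y * q ^ j) q (n - l) * qBinom q n l) := by
    intro l hl
    have hln : l ≤ n := Nat.lt_succ_iff.mp (mem_range.mp hl)
    have hsub : j + n - l = j + (n - l) := by omega
    have hbin := qBinom_mul_qBinom_comm hq (by omega : l + j ≤ j + n)
    rw [Nat.add_sub_cancel_left, hsub] at hbin
    rw [phi, hsub, qPoch_add, qPoch_add]
    linear_combination (y ^ l * qPoch μ q l * qPoch y q j * qPoch (y * q ^ j) q (n - l)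
      * q ^ (j * l) / (qPoch (μ * y) q j * qPoch (μ * y * q ^ j) q n)) * hbin
  have htail : ∑ l ∈ range j, phi q μ y (n + 1 + l) (j + n) * q ^ (j * (n + 1 + l))
      * qBinom q (j + n - (n + 1 + l)) j = 0 :=
    sum_eq_zero fun l hl => by rw [qBinom_of_lt (by have := mem_range.mp hl; omega), mul_zero]
  rw [show j + n + 1 = n + 1 + j by ring, sum_range_add, htail, add_zero, sum_congr rfl hsummand,
    ← mul_sum, ← qPoch_mul_eq_sum_qBinom hq, eta, ← mul_assoc μ y]
  field_simp [hμy j, hμyj n]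

noncomputable def phiEigenfn (q : ℝ) (j n : ℕ) : ℝ := q⁻¹ ^ (j * n) * qBinom q n j

noncomputable def phiDualEigenfn (q : ℝ) (i j : ℕ) : ℝ :=
  (-1) ^ (i + j) * q ^ (i.choose 2 + (j + 1).choose 2) * qBinom q j i

theorem phiEigenfn_of_lt {q : ℝ} {j n : ℕ} (h : n < j) : phiEigenfn q j n = 0 := by
  rw [phiEigenfn, qBinom_of_lt h, mul_zero]

theorem sum_phi_mul_phiEigenfn {q μ y : ℝ} (hq0 : q ≠ 0) (hq : ∀ k, qPoch q q k ≠ 0)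
    (hμy : ∀ k, qPoch (μ * y) q k ≠ 0) (j m : ℕ) :
    ∑ l ∈ range (m + 1), phi q μ y l m * phiEigenfn q j (m - l)
      = eta q μ y j * phiEigenfn q j m := by
  have h : ∀ l ∈ range (m + 1), phi q μ y l m * phiEigenfn q j (m - l)
      = q⁻¹ ^ (j * m) * (phi q μ y l m * q ^ (j * l) * qBinom q (m - l) j) := by
    intro l hl
    obtain ⟨k, rfl⟩ := Nat.exists_eq_add_of_le (Nat.lt_succ_iff.mp (mem_range.mp hl))
    rw [phiEigenfn, Nat.add_sub_cancel_left, mul_add, pow_add, inv_pow q (j * l)]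
    field_simp
  rw [sum_congr rfl h, ← mul_sum, sum_phi_mul_pow_mul_qBinom hq hμy, phiEigenfn]
  ring

theorem sum_phiDualEigenfn_mul_phiEigenfn {q : ℝ} (hq0 : q ≠ 0) (hq : ∀ k, qPoch q q k ≠ 0)
    {i m : ℕ} (him : i ≤ m) :
    ∑ j ∈ Icc i m, phiDualEigenfn q i j * phiEigenfn q j m = if i = m then 1 else 0 := by
  obtain ⟨n, rfl⟩ := Nat.exists_eq_add_of_le him
  -- with `j = i + s` the sum is the q-binomial expansion of `(q^{i+1-m}; q)_{m-i}`
  have hterm : ∀ s ∈ range (n + 1), phiDualEigenfn q i (i + s) * phiEigenfn q (i + s) (i + n)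
      = qBinom q (i + n) i * q ^ (i.choose 2 + (i + 1).choose 2) * q⁻¹ ^ (i * (i + n))
        * ((-1) ^ s * q ^ s.choose 2 * (q ^ (i + 1) * q⁻¹ ^ (i + n)) ^ s * qBinom q n s) := by
    intro s hs
    have hbin := qBinom_mul_qBinom hq (by have := mem_range.mp hs; omega : i + s ≤ i + n)
    rw [Nat.add_sub_cancel_left] at hbin
    rw [phiDualEigenfn, phiEigenfn, show i + s + 1 = i + 1 + s by ring, Nat.choose_two_add,
      show i + (i + s) = 2 * i + s by ring, pow_add (-1 : ℝ), pow_mul, neg_one_sq, one_pow,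
      one_mul]
    linear_combination ((-1) ^ s
      * q ^ (i.choose 2 + ((i + 1).choose 2 + s.choose 2 + (i + 1) * s))
      * q⁻¹ ^ ((i + s) * (i + n))) * hbin
  rw [← Finset.Ico_add_one_right_eq_Icc, sum_Ico_eq_sum_range,
    show i + n + 1 - i = n + 1 by omega, sum_congr rfl hterm, ← mul_sum, ← qPoch_eq_sum_qBinom hq]
  rcases n with _ | k
  · rw [add_zero, if_pos rfl, qPoch_zero, qBinom_self hq, Nat.choose_two_add_succ_choose_two,
      inv_pow, one_mul, mul_one, mul_inv_cancel₀ (pow_ne_zero _ hq0)]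
  · have hfactor : q ^ (i + 1) * q⁻¹ ^ (i + (k + 1)) * q ^ k = 1 := by
      rw [inv_pow]
      field_simp
      ring
    rw [if_neg (by omega), qPoch_succ, hfactor, sub_self, mul_zero, mul_zero]

-- `phiConv q μ y r m (m - i)` is `G_{m,i}(0, …, 0)` with `r` zeros.
noncomputable def phiConv (q μ y : ℝ) (r m n : ℕ) : ℝ :=
  ∑ t ∈ Finset.Nat.antidiagonalTuple r n,
    ∏ k : Fin r, phi q μ y (t k) (m - ∑ k' ∈ Finset.univ.filter (fun k' : Fin r => k' < k), t k')

theorem phiConv_zero (q μ y : ℝ) (m n : ℕ) : phiConv q μ y 0 m n = if n = 0 then 1 else 0 := by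
  cases n <;> simp [phiConv]

theorem phiConv_succ (q μ y : ℝ) (r m n : ℕ) :
    phiConv q μ y (r + 1) m n
      = ∑ p ∈ antidiagonal n, phi q μ y p.1 m * phiConv q μ y r (m - p.1) p.2 := by
  rw [phiConv, Nat.sum_antidiagonalTuple_succ]
  refine sum_congr rfl fun p _ => ?_
  rw [phiConv, mul_sum]
  refine sum_congr rfl fun t _ => ?_
  simp [Fin.prod_univ_succ, sum_filter, Fin.sum_univ_succ, Fin.succ_lt_succ_iff, Nat.sub_sub]

theorem phiConv_eq_sum {q μ y : ℝ} (hq0 : q ≠ 0) (hq : ∀ k, qPoch q q k ≠ 0)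
    (hμy : ∀ k, qPoch (μ * y) q k ≠ 0) (r : ℕ) {i m : ℕ} (him : i ≤ m) :
    phiConv q μ y r m (m - i)
      = ∑ j ∈ Icc i m, phiDualEigenfn q i j * phiEigenfn q j m * eta q μ y j ^ r := by
  induction r generalizing m with
  | zero =>
    simp only [pow_zero, mul_one]
    rw [phiConv_zero, sum_phiDualEigenfn_mul_phiEigenfn hq0 hq him]
    exact if_congr (by omega) rfl rfl
  | succ r ih =>
    rw [phiConv_succ, Nat.sum_antidiagonal_eq_sum_range_succ_mk]
    calc ∑ l ∈ range (m - i + 1), phi q μ y l m * phiConv q μ y r (m - l) (m - i - l)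
        = ∑ l ∈ range (m + 1), phi q μ y l m *
            ∑ j ∈ Icc i m, phiDualEigenfn q i j * phiEigenfn q j (m - l) * eta q μ y j ^ r := by
          refine sum_subset_zero_on_sdiff (range_subset_range.mpr (by omega)) (fun l hl => ?_)
            (fun l hl => ?_)
          · simp only [mem_sdiff, mem_range] at hl
            rw [sum_eq_zero fun j hj => by
              rw [phiEigenfn_of_lt (by have := (mem_Icc.mp hj).1; omega), mul_zero, zero_mul],
              mul_zero]
          · rw [show m - i - l = m - l - i by omega, ih (by have := mem_range.mp hl; omega)]
            refine congrArg _ <|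
              sum_subset (Icc_subset_Icc_right (Nat.sub_le m l)) fun j hj hj' => ?_
            rw [phiEigenfn_of_lt (by simp only [mem_Icc] at hj hj'; omega), mul_zero, zero_mul]
      _ = ∑ j ∈ Icc i m, phiDualEigenfn q i j * eta q μ y j ^ r *
            ∑ l ∈ range (m + 1), phi q μ y l m * phiEigenfn q j (m - l) := by
          simp_rw [mul_sum]
          rw [sum_comm]
          exact sum_congr rfl fun j _ => sum_congr rfl fun l _ => by ring
      _ = _ := by
          refine sum_congr rfl fun j _ => ?_
          rw [sum_phi_mul_phiEigenfn hq0 hq hμy, pow_succ]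
          ring

theorem G_zero_defects_general (q μ y : ℝ) (m i r : ℕ) (hi : i ≤ m)
    (hq0 : 0 < q) (hq1 : q < 1) (hμ1 : μ < 1) (hy0 : 0 < y) (hy1 : y < 1) :
    (∑ t ∈ Finset.Nat.antidiagonalTuple r (m - i),
        ∏ k : Fin r, phi q μ y (t k)
          (m - ∑ k' ∈ Finset.univ.filter (fun k' : Fin r => k' < k), t k'))
      = ∑ j ∈ Finset.Icc i m,
          (-1 : ℝ) ^ (i + j) *
            q ^ (((i * (i - 1) / 2 + j * (j + 1) / 2 : ℕ) : ℤ) - (j * m : ℤ)) *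
            qBinom q m j * qBinom q j i * (eta q μ y j) ^ r := by
  have hq : ∀ k, qPoch q q k ≠ 0 := fun k => (qPoch_pos hq1 hq0.le hq1.le k).ne'
  have hμy : ∀ k, qPoch (μ * y) q k ≠ 0 := fun k => (qPoch_pos (by nlinarith) hq0.le hq1.le k).ne'
  refine (phiConv_eq_sum hq0.ne' hq hμy r hi).trans (sum_congr rfl fun j _ => ?_)
  rw [phiDualEigenfn, phiEigenfn, Nat.choose_two_right, Nat.choose_two_right, Nat.add_sub_cancel,
    mul_comm (j + 1), zpow_sub₀ hq0.ne', ← Nat.cast_mul, zpow_natCast, zpow_natCast, pow_add,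
    inv_pow]
  ring

theorem G_zero_defects (q μ y : ℝ) (m i r : ℕ) (hi : i ≤ m)
    (hq0 : 0 < q) (hq1 : q < 1) (hμ0 : 0 < μ) (hμ1 : μ < 1) (hy0 : 0 < y) (hy1 : y < 1) :
    (∑ t ∈ Finset.Nat.antidiagonalTuple r (m - i),
        ∏ k : Fin r, phi q μ y (t k)
          (m - ∑ k' ∈ Finset.univ.filter (fun k' : Fin r => k' < k), t k'))
      = ∑ j ∈ Finset.Icc i m,
          (-1 : ℝ) ^ (i + j) *
            q ^ (((i * (i - 1) / 2 + j * (j + 1) / 2 : ℕ) : ℤ) - (j * m : ℤ)) *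
            qBinom q m j * qBinom q j i * (eta q μ y j) ^ r :=
  G_zero_defects_general q μ y m i r hi hq0 hq1 hμ1 hy0 hy1
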